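/- arXiv:2603.01995 — 2 statements merged into one kernel-verified Lean document; each statement's English description precedes it below -/
import Mathlib

section
/- Let n ≥ 1 and let (A_1, …, A_{2n}) be a Clifford system on ℝ^m. Then for all x ∈ ℝ^m: ‖∇q(x)‖² = 16 ‖x‖² q(x), where q(x) = Σ_{i=1}^{2n} ⟨x,A_ix⟩². -/
/-! The gradient is `∇q(x) = 4 ∑ᵢ Pᵢ(x) Aᵢx`. Since the `Aᵢ` are symmetric,
`2⟪Aᵢx, Aⱼx⟫ = ⟪x, (AᵢAⱼ + AⱼAᵢ)x⟫ = 2δᵢⱼ‖x‖²`, so the vectors `Aᵢx` are pairwise orthogonal of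
length `‖x‖`, and Pythagoras gives `‖∇q(x)‖² = 16 ∑ᵢ Pᵢ(x)² ‖x‖² = 16 ‖x‖² q(x)`. -/

open RealInnerProductSpace

/-- The quadratic form `P(x) = ⟨x, A x⟩` associated to an `m × m` real matrix `A`. -/
noncomputable def quadForm {m : ℕ} (A : Matrix (Fin m) (Fin m) ℝ)
    (x : EuclideanSpace ℝ (Fin m)) : ℝ :=
  ⟪x, Matrix.toEuclideanLin A x⟫

/-- A Clifford system on `ℝ^m`. -/
def IsCliffordSystem {m N : ℕ} (A : Fin N → Matrix (Fin m) (Fin m) ℝ) : Prop :=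
  (∀ i, (A i).IsSymm) ∧
    ∀ i j, A i * A j + A j * A i
      = (if i = j then (2 : ℝ) else 0) • (1 : Matrix (Fin m) (Fin m) ℝ)

/-- For a Clifford system `(A_1, …, A_{2n})` on `ℝ^m`, the degree-4 polynomial
`u(x) = Σ_{i=1}^n ⟨x, A_i x⟩² − Σ_{i=1}^n ⟨x, A_{n+i} x⟩²`. -/
noncomputable def cliffU {m n : ℕ} (A : Fin (n + n) → Matrix (Fin m) (Fin m) ℝ)
    (x : EuclideanSpace ℝ (Fin m)) : ℝ :=
  ∑ i : Fin n, (quadForm (A (Fin.castAdd n i)) x) ^ 2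
    - ∑ i : Fin n, (quadForm (A (Fin.natAdd n i)) x) ^ 2

/-- For a Clifford system `(A_1, …, A_{2n})` on `ℝ^m`, the degree-4 polynomial
`q(x) = Σ_{i=1}^{2n} ⟨x, A_i x⟩² = ‖P(x)‖²`. -/
noncomputable def cliffQ {m n : ℕ} (A : Fin (n + n) → Matrix (Fin m) (Fin m) ℝ)
    (x : EuclideanSpace ℝ (Fin m)) : ℝ :=
  ∑ i : Fin (n + n), (quadForm (A i) x) ^ 2

section GradientCalculus

variable {F : Type*} [NormedAddCommGroup F] [InnerProductSpace ℝ F] [CompleteSpace F]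
  {x : F}

theorem HasGradientAt.fun_sum {ι : Type*} {s : Finset ι} {f : ι → F → ℝ} {g : ι → F}
    (h : ∀ i ∈ s, HasGradientAt (f i) (g i) x) :
    HasGradientAt (fun y => ∑ i ∈ s, f i y) (∑ i ∈ s, g i) x := by
  rw [hasGradientAt_iff_hasFDerivAt, map_sum]
  exact HasFDerivAt.fun_sum fun i hi => hasGradientAt_iff_hasFDerivAt.mp (h i hi)

theorem HasGradientAt.pow {f : F → ℝ} {g : F} (h : HasGradientAt f g x) (n : ℕ) :
    HasGradientAt (fun y => f y ^ n) ((n * f x ^ (n - 1)) • g) x := by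
  refine hasGradientAt_iff_hasFDerivAt.mpr <|
    (hasGradientAt_iff_hasFDerivAt.mp h).pow n |>.congr_fderiv ?_
  ext v
  simp [InnerProductSpace.toDual_apply_apply, nsmul_eq_mul]

theorem LinearMap.IsSymmetric.hasGradientAt_inner_self_apply [FiniteDimensional ℝ F]
    {T : F →ₗ[ℝ] F} (hT : T.IsSymmetric) (x : F) :
    HasGradientAt (fun y => ⟪y, T y⟫) ((2 : ℝ) • T x) x := by
  refine hasGradientAt_iff_hasFDerivAt.mpr <|
    (hasFDerivAt_id x).inner ℝ T.toContinuousLinearMap.hasFDerivAt |>.congr_fderiv ?_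
  ext v
  simp only [id_eq, coe_toContinuousLinearMap', ContinuousLinearMap.comp_apply,
    ContinuousLinearMap.prod_apply, ContinuousLinearMap.id_apply, fderivInnerCLM_apply,
    map_smul, _root_.smul_apply, InnerProductSpace.toDual_apply_apply, smul_eq_mul]
  rw [← hT x v, real_inner_comm (T x) v]
  ring

end GradientCalculus

open Matrix

theorem Matrix.IsSymm.isSymmetric_toEuclideanLin {n : Type*} [Fintype n] [DecidableEq n]
    {B : Matrix n n ℝ} (hB : B.IsSymm) : (toEuclideanLin B).IsSymmetric :=
  isSymmetric_toEuclideanLin_iff.mpr (isHermitian_iff_isSymm.mpr hB)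

theorem hasGradientAt_quadForm {m : ℕ} {B : Matrix (Fin m) (Fin m) ℝ} (hB : B.IsSymm)
    (x : EuclideanSpace ℝ (Fin m)) :
    HasGradientAt (quadForm B) ((2 : ℝ) • toEuclideanLin B x) x :=
  hB.isSymmetric_toEuclideanLin.hasGradientAt_inner_self_apply x

theorem hasGradientAt_cliffQ {m n : ℕ} {A : Fin (n + n) → Matrix (Fin m) (Fin m) ℝ}
    (hA : ∀ i, (A i).IsSymm) (x : EuclideanSpace ℝ (Fin m)) :
    HasGradientAt (cliffQ A) (∑ i, (4 * quadForm (A i) x) • toEuclideanLin (A i) x) x := by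
  convert HasGradientAt.fun_sum (s := Finset.univ) fun i _ =>
    (hasGradientAt_quadForm (hA i) x).pow 2 using 1
  · rfl
  · refine Finset.sum_congr rfl fun i _ => ?_
    rw [smul_smul]
    congr 1
    norm_num
    ring

namespace IsCliffordSystem

variable {m N : ℕ} {A : Fin N → Matrix (Fin m) (Fin m) ℝ}

theorem inner_toEuclideanLin_apply (hA : IsCliffordSystem A) (i j : Fin N)
    (x : EuclideanSpace ℝ (Fin m)) :
    ⟪toEuclideanLin (A i) x, toEuclideanLin (A j) x⟫ = if i = j then ‖x‖ ^ 2 else 0 := by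
  have hanti : ⟪toEuclideanLin (A i) x, toEuclideanLin (A j) x⟫
      + ⟪toEuclideanLin (A j) x, toEuclideanLin (A i) x⟫
      = ⟪x, toEuclideanLin (A i * A j + A j * A i) x⟫ := by
    rw [map_add, LinearMap.add_apply, inner_add_right, toLpLin_mul_same, toLpLin_mul_same,
      LinearMap.comp_apply, LinearMap.comp_apply, (hA.1 i).isSymmetric_toEuclideanLin,
      (hA.1 j).isSymmetric_toEuclideanLin]
  rw [hA.2 i j, map_smul, toLpLin_one, LinearMap.smul_apply, LinearMap.id_apply,
    real_inner_smul_right, real_inner_self_eq_norm_sq,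
    real_inner_comm (toEuclideanLin (A i) x)] at hanti
  split_ifs at hanti ⊢ <;> linarith

theorem norm_sum_smul_toEuclideanLin_sq (hA : IsCliffordSystem A) (c : Fin N → ℝ)
    (x : EuclideanSpace ℝ (Fin m)) :
    ‖∑ i, c i • toEuclideanLin (A i) x‖ ^ 2 = (∑ i, c i ^ 2) * ‖x‖ ^ 2 := by
  rw [← real_inner_self_eq_norm_sq, sum_inner, Finset.sum_mul]
  refine Finset.sum_congr rfl fun i _ => ?_
  simp only [inner_sum, real_inner_smul_right, real_inner_smul_left,
    hA.inner_toEuclideanLin_apply, mul_ite, mul_zero, Finset.sum_ite_eq, Finset.mem_univ,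
    if_true]
  ring

end IsCliffordSystem

theorem grad_q_sq_general {m n : ℕ}
    (A : Fin (n + n) → Matrix (Fin m) (Fin m) ℝ) (hA : IsCliffordSystem A) :
    ∀ x : EuclideanSpace ℝ (Fin m),
      ‖gradient (cliffQ A) x‖ ^ 2 = 16 * ‖x‖ ^ 2 * cliffQ A x := by
  intro x
  rw [(hasGradientAt_cliffQ hA.1 x).gradient, hA.norm_sum_smul_toEuclideanLin_sq, cliffQ,
    Finset.mul_sum, Finset.sum_mul]
  exact Finset.sum_congr rfl fun i _ => by ring

/-- For a Clifford system `(A_1, …, A_{2n})` on `ℝ^m` (`n ≥ 1`):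
`‖∇q(x)‖² = 16 ‖x‖² q(x)` for all `x ∈ ℝ^m`. -/
theorem grad_q_sq {m n : ℕ} (hn : 1 ≤ n)
    (A : Fin (n + n) → Matrix (Fin m) (Fin m) ℝ) (hA : IsCliffordSystem A) :
    ∀ x : EuclideanSpace ℝ (Fin m),
      ‖gradient (cliffQ A) x‖ ^ 2 = 16 * ‖x‖ ^ 2 * cliffQ A x :=
  grad_q_sq_general A hA
end

section
/- Let n ≥ 1 and let (A_1, …, A_{2n}) be a Clifford system on ℝ^m. Then for all x ∈ ℝ^m: ⟨∇u(x), ∇q(x)⟩ = 16 ‖x‖² u(x), where u(x) = Σ_{i=1}^n ⟨x,A_ix⟩² − Σ_{i=1}^n ⟨x,A_{n+i}x⟩² and q(x) = Σ_{i=1}^{2n} ⟨x,A_ix⟩². -/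
open RealInnerProductSpace

/-!
The gradient of `P_i²` is `4 P_i(x) A_i x`, and the Clifford relations make the vectors `A_i x`
pairwise orthogonal of length `‖x‖`. Hence for any two weighted sums of squares `Σ w_i P_i²` and
`Σ w'_i P_i²` the inner product of the gradients is `16 ‖x‖² Σ w_i w'_i P_i²`; `u` and `q` are the
weights `(1, …, 1, -1, …, -1)` and `(1, …, 1)`.
-/

open Finset

lemma Matrix.IsSymm.isSymmetric_toEuclideanLin_s9 {ι : Type*} [Fintype ι] [DecidableEq ι]
    {A : Matrix ι ι ℝ} (h : A.IsSymm) : (Matrix.toEuclideanLin A).IsSymmetric :=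
  Matrix.isSymmetric_toEuclideanLin_iff.mpr (Matrix.isHermitian_iff_isSymm.mpr h)

section

variable {m : ℕ}

lemma hasGradientAt_quadForm_s9 {A : Matrix (Fin m) (Fin m) ℝ} (h : A.IsSymm)
    (x : EuclideanSpace ℝ (Fin m)) :
    HasGradientAt (quadForm A) ((2 : ℝ) • Matrix.toEuclideanLin A x) x := by
  set T := LinearMap.toContinuousLinearMap (Matrix.toEuclideanLin A)
  have hq : quadForm A = T.reApplyInnerSelf := by
    funext y
    simp [T, quadForm, ContinuousLinearMap.reApplyInnerSelf_apply, real_inner_comm]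
  rw [hasGradientAt_iff_hasFDerivAt, hq]
  refine (h.isSymmetric_toEuclideanLin_s9.hasStrictFDerivAt_reApplyInnerSelf (T := T) x)
    |>.hasFDerivAt.congr_fderiv ?_
  ext v
  simp [T]

noncomputable def weightedSqSum {N : ℕ} (A : Fin N → Matrix (Fin m) (Fin m) ℝ) (w : Fin N → ℝ)
    (x : EuclideanSpace ℝ (Fin m)) : ℝ :=
  ∑ i, w i * quadForm (A i) x ^ 2

lemma hasGradientAt_weightedSqSum {N : ℕ} {A : Fin N → Matrix (Fin m) (Fin m) ℝ}
    (hA : ∀ i, (A i).IsSymm) (w : Fin N → ℝ) (x : EuclideanSpace ℝ (Fin m)) :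
    HasGradientAt (weightedSqSum A w)
      (∑ i, (4 * w i * quadForm (A i) x) • Matrix.toEuclideanLin (A i) x) x := by
  have h := HasFDerivAt.fun_sum (u := univ) fun i _ =>
    (((hasGradientAt_quadForm_s9 (hA i) x).hasFDerivAt.pow 2).const_mul (w i))
  rw [hasGradientAt_iff_hasFDerivAt]
  refine h.congr_fderiv ?_
  ext v
  simp only [FunLike.coe_sum, FunLike.coe_smul, Finset.sum_apply,
    Pi.smul_apply, InnerProductSpace.toDual_apply_apply, sum_inner, real_inner_smul_left,
    smul_eq_mul, nsmul_eq_mul, Nat.cast_ofNat]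
  exact sum_congr rfl fun i _ => by ring

namespace IsCliffordSystem

variable {N : ℕ} {A : Fin N → Matrix (Fin m) (Fin m) ℝ}

theorem inner_toEuclideanLin (hA : IsCliffordSystem A) (i j : Fin N)
    (x : EuclideanSpace ℝ (Fin m)) :
    ⟪Matrix.toEuclideanLin (A i) x, Matrix.toEuclideanLin (A j) x⟫
      = if i = j then ‖x‖ ^ 2 else 0 := by
  have h2 : 2 * ⟪Matrix.toEuclideanLin (A i) x, Matrix.toEuclideanLin (A j) x⟫
      = ⟪x, Matrix.toEuclideanLin (A i * A j + A j * A i) x⟫ := by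
    rw [map_add, LinearMap.add_apply, inner_add_right, Matrix.toLpLin_mul_same,
      Matrix.toLpLin_mul_same, LinearMap.comp_apply, LinearMap.comp_apply,
      ← (hA.1 i).isSymmetric_toEuclideanLin_s9,
      ← (hA.1 j).isSymmetric_toEuclideanLin_s9, real_inner_comm]
    ring
  rw [hA.2 i j] at h2
  split_ifs at h2 ⊢ <;>
    simp only [zero_smul, map_zero, LinearMap.zero_apply, inner_zero_right, map_smul,
      LinearMap.smul_apply, Matrix.toLpLin_one, LinearMap.id_apply, real_inner_smul_right,
      real_inner_self_eq_norm_sq] at h2 <;> linarith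

theorem inner_sum_smul_toEuclideanLin (hA : IsCliffordSystem A) (c d : Fin N → ℝ)
    (x : EuclideanSpace ℝ (Fin m)) :
    ⟪∑ i, c i • Matrix.toEuclideanLin (A i) x, ∑ j, d j • Matrix.toEuclideanLin (A j) x⟫
      = (∑ i, c i * d i) * ‖x‖ ^ 2 := by
  rw [sum_inner, sum_mul]
  refine sum_congr rfl fun i _ => ?_
  simp only [inner_sum, real_inner_smul_left, real_inner_smul_right, hA.inner_toEuclideanLin,
    mul_ite, mul_zero, sum_ite_eq, mem_univ, if_true]
  ring

theorem inner_gradient_weightedSqSum (hA : IsCliffordSystem A) (w w' : Fin N → ℝ)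
    (x : EuclideanSpace ℝ (Fin m)) :
    ⟪gradient (weightedSqSum A w) x, gradient (weightedSqSum A w') x⟫
      = 16 * ‖x‖ ^ 2 * weightedSqSum A (w * w') x := by
  rw [(hasGradientAt_weightedSqSum hA.1 w x).gradient,
    (hasGradientAt_weightedSqSum hA.1 w' x).gradient, hA.inner_sum_smul_toEuclideanLin,
    weightedSqSum, mul_sum, sum_mul]
  exact sum_congr rfl fun i _ => by simp only [Pi.mul_apply]; ring

end IsCliffordSystem

lemma cliffU_eq_weightedSqSum {n : ℕ} (A : Fin (n + n) → Matrix (Fin m) (Fin m) ℝ) :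
    cliffU A = weightedSqSum A (Fin.append (fun _ => 1) (fun _ => -1)) := by
  funext x
  simp only [cliffU, weightedSqSum, Fin.sum_univ_add, Fin.append_left, Fin.append_right, one_mul,
    neg_one_mul, sum_neg_distrib, sub_eq_add_neg]

lemma cliffQ_eq_weightedSqSum {n : ℕ} (A : Fin (n + n) → Matrix (Fin m) (Fin m) ℝ) :
    cliffQ A = weightedSqSum A 1 := by
  funext x
  simp [cliffQ, weightedSqSum]

end

theorem grad_u_grad_q_general {m n : ℕ}
    (A : Fin (n + n) → Matrix (Fin m) (Fin m) ℝ) (hA : IsCliffordSystem A) :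
    ∀ x : EuclideanSpace ℝ (Fin m),
      ⟪gradient (cliffU A) x, gradient (cliffQ A) x⟫ = 16 * ‖x‖ ^ 2 * cliffU A x := by
  intro x
  rw [cliffU_eq_weightedSqSum, cliffQ_eq_weightedSqSum,
    IsCliffordSystem.inner_gradient_weightedSqSum hA, mul_one]

/-- For a Clifford system `(A_1, …, A_{2n})` on `ℝ^m` (`n ≥ 1`):
`⟨∇u(x), ∇q(x)⟩ = 16 ‖x‖² u(x)` for all `x ∈ ℝ^m`. -/
theorem grad_u_grad_q {m n : ℕ} (hn : 1 ≤ n)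
    (A : Fin (n + n) → Matrix (Fin m) (Fin m) ℝ) (hA : IsCliffordSystem A) :
    ∀ x : EuclideanSpace ℝ (Fin m),
      ⟪gradient (cliffU A) x, gradient (cliffQ A) x⟫ = 16 * ‖x‖ ^ 2 * cliffU A x :=
  grad_u_grad_q_general A hA
end
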